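/- Let Z, Z' be zones and α a bound function. Then Z ⊄ Closure_α(Z') if and only if there exist clocks x, y, both different from x₀, such that one of the following holds: (1) Z'_{0x} < Z_{0x} and Z'_{0x} ≤ (≤,α_x); or (2) Z'_{x0} < Z_{x0} and Z_{x0} ≥ (≤,−α_x); or (3) Z_{x0} ≥ (≤,−α_x) and Z'_{xy} < Z_{xy} and Z'_{xy} ≤ (≤,α_y) + ⌊Z_{x0}⌋. -/

import Mathlib

/-!
The proof rests on the extension property of canonical distance graphs: values given to some of
the vertices that satisfy the constraints among them extend to a solution of the whole graph, and
each new vertex can moreover be placed inside a prescribed up-closed set of reals, as long as that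
set meets the constraints coming from every vertex already placed. When one vertex is added, its
admissible values are cut out by half-lines, any two of which meet by the triangle inequality, so
a one-dimensional Helly argument places it.

Region equivalence preserves every integer constraint between `x₀` and clocks below their bound.
If none of the three conditions holds, a valuation `v ∈ Z` is matched in `Z'` by keeping `v` on
the clocks below their bound and extending with values above `α` on the others: the negated
conditions say exactly that these requirements are compatible with the constraints of `Z'`.
Conversely, each condition yields `v ∈ Z` violating a constraint of `Z'` that the region of `v`
decides. In (1) and (2), `v` exists because the smaller edge of `Z'` does not bound `Z` (in (2)
`v` also violates `(<, -α_x)`, which keeps `x` below its bound); in (3) the extension property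
moreover forces `v x ≤ -⌊Z_{x0}⌋`, so that when `y` is above its bound, `y - x` still exceeds
`α_y + ⌊Z_{x0}⌋ ≥ Z'_{xy}`.
-/

attribute [local instance] Classical.propDecidable

noncomputable section

namespace TAform

/-! ### Weights `(≼, c)` with `c ∈ ℤ ∪ {∞}` -/

/-- Values in `ℤ ∪ {∞}`: `none` represents `∞`. -/
abbrev OVal := Option ℤ

/-- Addition on `ℤ ∪ {∞}`. -/
def ovAdd : OVal → OVal → OVal
  | some a, some b => some (a + b)
  | _, _ => none

/-- Strict order on `ℤ ∪ {∞}`. -/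
def ovLt : OVal → OVal → Prop
  | some a, some b => a < b
  | some _, none => True
  | none, _ => False

/-- A weight `(≼, c)`: `strict = true` means `≼` is `<`, `strict = false` means `≤`;
`val ∈ ℤ ∪ {∞}`. -/
structure Weight where
  strict : Bool
  val : OVal

/-- The weight `(<, ∞)`. -/
def winf : Weight := ⟨true, none⟩

/-- The weight `(≤, c)`. -/
def wle (c : ℤ) : Weight := ⟨false, some c⟩

/-- The weight `(<, c)`. -/
def wlt (c : ℤ) : Weight := ⟨true, some c⟩

/-- Addition: `(≼₁,c₁)+(≼₂,c₂) = (≼,c₁+c₂)` where `≼` is `<` iff `≼₁` or `≼₂` is `<`. -/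
def Weight.add (a b : Weight) : Weight := ⟨a.strict || b.strict, ovAdd a.val b.val⟩

/-- Order: `(≼₁,c₁) < (≼₂,c₂)` iff `c₁ < c₂`, or `c₁ = c₂`, `≼₁` is `<` and `≼₂` is `≤`. -/
def Weight.lt (a b : Weight) : Prop :=
  ovLt a.val b.val ∨ (a.val = b.val ∧ a.strict = true ∧ b.strict = false)

def Weight.le (a b : Weight) : Prop := Weight.lt a b ∨ a = b

/-- Minus: `−(≼,c) = (≼,−c)`. -/
def Weight.neg (w : Weight) : Weight := ⟨w.strict, Option.map (fun c => -c) w.val⟩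

/-- Floor: `⌊(<,c)⌋ = (≤,c−1)` and `⌊(≤,c)⌋ = (≤,c)`. -/
def Weight.floor (w : Weight) : Weight :=
  ⟨false, if w.strict then Option.map (fun c => c - 1) w.val else w.val⟩

/-- Ceiling (on integer-valued weights): `⌈(≤,c)⌉ = (≤,c)` and `⌈(<,c)⌉ = (<,c+1)`. -/
def Weight.ceil (w : Weight) : Weight :=
  if w.strict then ⟨true, Option.map (fun c => c + 1) w.val⟩ else w

/-- Maximum of two weights. -/
def Weight.max (a b : Weight) : Weight := if Weight.lt a b then b else a

/-- Satisfaction: `d ≼ c` for a real number `d` and a weight `(≼,c)`. -/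
def Weight.sat (w : Weight) (d : ℝ) : Prop :=
  match w.val with
  | none => True
  | some c => if w.strict then d < (c : ℝ) else d ≤ (c : ℝ)

/-! ### Distance graphs and their semantics -/

/-- Vertices: clocks of `X` together with the special vertex `x₀` (represented by `none`). -/
abbrev Vtx (X : Type*) := Option X

/-- A distance graph: a weight for every ordered pair of vertices.  The edge
`a →^{≼ c} b` represents the constraint `v b − v a ≼ c`. -/
abbrev DGraph (X : Type*) := Vtx X → Vtx X → Weight

/-- A clock valuation. -/
abbrev Val (X : Type*) := X → ℝ

/-- The valuation is nonnegative (clock valuations map into `ℝ≥0`). -/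
def Nonneg {X : Type*} (v : Val X) : Prop := ∀ x, 0 ≤ v x

/-- Extension of a valuation to all vertices, sending `x₀` to `0`. -/
def extV {X : Type*} (v : Val X) : Vtx X → ℝ
  | none => 0
  | some x => v x

/-- Semantics of a distance graph: the set of nonnegative clock valuations
(with `x₀ = 0`) satisfying all edge constraints. -/
def sem {X : Type*} (G : DGraph X) : Set (Val X) :=
  { v | Nonneg v ∧ ∀ a b, (G a b).sat (extV v b - extV v a) }

/-- Weight of the path `a :: l ++ [b]` in `G` (sum of the weights of its edges). -/
def pathWeight {X : Type*} (G : DGraph X) : Vtx X → List (Vtx X) → Vtx X → Weight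
  | a, [], b => G a b
  | a, c :: l, b => (G a c).add (pathWeight G c l b)

/-- `G` has only positive cycles: no cycle has weight at most `(<,0)`. -/
def OnlyPositiveCycles {X : Type*} (G : DGraph X) : Prop :=
  ∀ (a : Vtx X) (l : List (Vtx X)), ¬ (pathWeight G a l a).le (wlt 0)

/-- Canonical form: the weight of the edge from `a` to `b` is a lower bound of the
weights of all paths from `a` to `b`. -/
def PathCanonical {X : Type*} (G : DGraph X) : Prop :=
  ∀ (a b : Vtx X) (l : List (Vtx X)), (G a b).le (pathWeight G a l b)

/-- The weight `w` bounds the difference `v b − v a` over all `v ∈ S`. -/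
def Bounds {X : Type*} (S : Set (Val X)) (a b : Vtx X) (w : Weight) : Prop :=
  ∀ v ∈ S, w.sat (extV v b - extV v a)

/-- `G` is the canonical distance graph of the set `S`: it represents `S` and each of
its edge weights is the least weight bounding the corresponding difference over `S`
(equivalently, for sets defined by clock constraints, the lower bound of the weights
of paths between its endpoints). -/
def IsCanonGraph {X : Type*} (G : DGraph X) (S : Set (Val X)) : Prop :=
  sem G = S ∧ ∀ a b w, Bounds S a b w → (G a b).le w

/-- A zone: a set of valuations defined by a conjunction of constraints of the form
`x − y # c` or `x # c`, i.e. the set represented by some distance graph. -/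
def IsZone {X : Type*} (Z : Set (Val X)) : Prop := ∃ G : DGraph X, sem G = Z

/-! ### Regions and closure -/

/-- Region equivalence with respect to the bound function `α`: same integer parts
(or both above the bound), same set of clocks with zero fractional part, and the
same ordering of fractional parts of bounded clocks. -/
def regEq {X : Type*} (α : X → ℕ) (v w : Val X) : Prop :=
  (∀ x, ((α x : ℝ) < v x ∧ (α x : ℝ) < w x) ∨
    (⌊v x⌋ = ⌊w x⌋ ∧ (Int.fract (v x) = 0 ↔ Int.fract (w x) = 0))) ∧
  (∀ x y, v x ≤ (α x : ℝ) → v y ≤ (α y : ℝ) →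
    (Int.fract (v x) ≤ Int.fract (v y) ↔ Int.fract (w x) ≤ Int.fract (w y)))

/-- A region with respect to `α`: an equivalence class of region equivalence
(inside the nonnegative valuations). -/
def IsRegion {X : Type*} (α : X → ℕ) (R : Set (Val X)) : Prop :=
  ∃ v : Val X, Nonneg v ∧ R = { w | Nonneg w ∧ regEq α v w }

/-- Closure abstraction: the union of the regions (w.r.t. `α`) intersecting `S`. -/
def Closure {X : Type*} (α : X → ℕ) (S : Set (Val X)) : Set (Val X) :=
  ⋃₀ { R | IsRegion α R ∧ (R ∩ S).Nonempty }

/-! ### LU-bounds and the `Extra⁺_LU` extrapolation -/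

/-- `w > (≤, l)` where `l ∈ ℕ ∪ {−∞}` (`⊥` is `−∞`). -/
def gtLB (w : Weight) (l : WithBot ℕ) : Prop :=
  ∀ n : ℕ, l = (n : WithBot ℕ) → ovLt (some (n : ℤ)) w.val

/-- `−w > (≤, l)` where `l ∈ ℕ ∪ {−∞}`. -/
def negGtLB (w : Weight) (l : WithBot ℕ) : Prop :=
  ∃ c : ℤ, w.val = some c ∧ ∀ n : ℕ, l = (n : WithBot ℕ) → c < -(n : ℤ)

/-- The weight `(<, −u)` for `u ∈ ℕ ∪ {−∞}` (with `(<,∞)` when `u = −∞`). -/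
def wltNeg (u : WithBot ℕ) : Weight :=
  ⟨true, WithBot.recBotCoe none (fun n => some (-(n : ℤ))) u⟩

/-- The `Extra⁺_{LU}` extrapolation, applied edgewise to a distance graph `G`
(the canonical graph of a zone): `Z⁺_{xy} = (<,∞)` if `Z_{xy} > (≤,L_y)`, or
`−Z_{y0} > (≤,L_y)`, or `−Z_{x0} > (≤,U_x)` and `y ≠ x₀`;
`Z⁺_{x0} = (<,−U_x)` if `−Z_{x0} > (≤,U_x)`; and `Z⁺_{xy} = Z_{xy}` otherwise. -/
def extraLU {X : Type*} (L U : X → WithBot ℕ) (G : DGraph X) : DGraph X := fun a b =>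
  match a, b with
  | some x, some y =>
      if gtLB (G (some x) (some y)) (L y) ∨ negGtLB (G (some y) none) (L y) ∨
          negGtLB (G (some x) none) (U x)
      then winf else G (some x) (some y)
  | none, some y =>
      if gtLB (G none (some y)) (L y) ∨ negGtLB (G (some y) none) (L y)
      then winf else G none (some y)
  | some x, none =>
      if negGtLB (G (some x) none) (U x) then wltNeg (U x) else G (some x) none
  | none, none => G none none

/-! ### LU-preorder and its abstraction -/

/-- `l < r` where `l ∈ ℕ ∪ {−∞}` and `r : ℝ`. -/
def lbLtR (l : WithBot ℕ) (r : ℝ) : Prop := ∀ n : ℕ, l = (n : WithBot ℕ) → (n : ℝ) < r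

/-- The LU-preorder `ν' ≼_{LU} ν`: for each clock `x`, either `ν' x = ν x`,
or `L x < ν' x < ν x`, or `U x < ν x < ν' x`. -/
def LUpre {X : Type*} (L U : X → WithBot ℕ) (ν' ν : Val X) : Prop :=
  ∀ x, ν' x = ν x ∨ (lbLtR (L x) (ν' x) ∧ ν' x < ν x) ∨ (lbLtR (U x) (ν x) ∧ ν x < ν' x)

/-- The abstraction `a_{≼LU}(W) = { ν | ∃ ν' ∈ W, ν' ≼_{LU} ν }` (inside the
nonnegative valuations). -/
def aLU {X : Type*} (L U : X → WithBot ℕ) (W : Set (Val X)) : Set (Val X) :=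
  { ν | Nonneg ν ∧ ∃ ν' ∈ W, LUpre L U ν' ν }

/-! ### Guards, transitions, timed automata -/

/-- Comparison operators `# ∈ {<, ≤, =, ≥, >}`. -/
inductive Cmp | lt | le | eq | ge | gt
deriving DecidableEq

/-- Satisfaction of a comparison by real numbers. -/
def Cmp.sat : Cmp → ℝ → ℝ → Prop
  | .lt, a, b => a < b
  | .le, a, b => a ≤ b
  | .eq, a, b => a = b
  | .ge, a, b => a ≥ b
  | .gt, a, b => a > b

/-- A clock constraint (guard): a conjunction (list) of constraints `x # c`, `c ∈ ℕ`. -/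
abbrev Guard (X : Type*) := List (X × Cmp × ℕ)

/-- `v ⊨ g`: every conjunct of the guard holds. -/
def gsat {X : Type*} (v : Val X) (g : Guard X) : Prop :=
  ∀ p ∈ g, Cmp.sat p.2.1 (v p.1) (p.2.2 : ℝ)

/-- `[R]v`: reset the clocks in `R` to `0`, leaving the others unchanged. -/
def resetVal {X : Type*} (R : Set X) (v : Val X) : Val X := Set.indicator Rᶜ v

/-- One step `ν →^{δ,t} ν'` for a transition with guard `g` and reset set `R`:
`ν + δ ⊨ g` and `ν' = [R](ν + δ)`. -/
def step {X : Type*} (g : Guard X) (R : Set X) (δ : ℝ) (ν ν' : Val X) : Prop :=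
  0 ≤ δ ∧ gsat (fun x => ν x + δ) g ∧ ν' = resetVal R (fun x => ν x + δ)

/-- `Post(S,t)`: all valuations reachable by the transition from valuations in `S`. -/
def Post {X : Type*} (g : Guard X) (R : Set X) (S : Set (Val X)) : Set (Val X) :=
  { ν' | ∃ ν ∈ S, ∃ δ : ℝ, step g R δ ν ν' }

/-- A timed automaton `(Q, q₀, X, T, Acc)`. -/
structure TimedAuto (Q X : Type*) where
  init : Q
  trans : Set (Q × Guard X × Set X × Q)
  acc : Set Q

/-- `(q,ν) →^{δ,t} (q',ν')` for a transition `t = (q,g,R,q')` of the automaton. -/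
def TimedAuto.cstep {Q X : Type*} (A : TimedAuto Q X) (t : Q × Guard X × Set X × Q)
    (δ : ℝ) (c c' : Q × Val X) : Prop :=
  t ∈ A.trans ∧ c.1 = t.1 ∧ c'.1 = t.2.2.2 ∧ step t.2.1 t.2.2.1 δ c.2 c'.2

lemma sub_le_intCast_iff_floor_fract (a b : ℝ) (m : ℤ) :
    b - a ≤ m ↔
      ⌊b⌋ - ⌊a⌋ < m ∨ ⌊b⌋ - ⌊a⌋ = m ∧ Int.fract b ≤ Int.fract a := by
  have hb := Int.floor_add_fract b
  have ha := Int.floor_add_fract a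
  have := Int.fract_nonneg a; have := Int.fract_nonneg b
  have := Int.fract_lt_one a; have := Int.fract_lt_one b
  rcases lt_trichotomy (⌊b⌋ - ⌊a⌋) m with h | h | h
  · have : ((⌊b⌋ - ⌊a⌋ : ℤ) : ℝ) + 1 ≤ m := by exact_mod_cast h
    push_cast at this
    simp only [h, true_or, iff_true]
    linarith
  · have : ((⌊b⌋ - ⌊a⌋ : ℤ) : ℝ) = m := by exact_mod_cast h
    push_cast at this
    simp only [h, lt_irrefl, true_and, false_or]
    constructor <;> intro <;> linarith
  · have : (m : ℝ) + 1 ≤ ((⌊b⌋ - ⌊a⌋ : ℤ) : ℝ) := by exact_mod_cast h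
    push_cast at this
    simp only [h.not_gt, h.ne', false_and, or_self, iff_false, not_le]
    linarith

lemma nonempty_biInter_of_pairwise_inter_real {ι : Type*} {F : ι → Set ℝ} {s : Finset ι}
    (hF : ∀ i ∈ s, Convex ℝ (F i)) (h : ∀ i ∈ s, ∀ j ∈ s, (F i ∩ F j).Nonempty) :
    (⋂ i ∈ s, F i).Nonempty := by
  refine Convex.helly_theorem' hF fun I hI hcard => ?_
  rw [Module.finrank_self] at hcard
  rcases I.eq_empty_or_nonempty with rfl | ⟨i, hi⟩
  · simp
  rcases (I.erase i).eq_empty_or_nonempty with he | ⟨j, hj⟩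
  · obtain rfl : I = {i} := by
      simpa [Finset.erase_eq_empty_iff, Finset.ne_empty_of_mem hi] using he
    simpa using h i (hI hi) i (hI hi)
  have hij : ∀ k ∈ I, k = i ∨ k = j := fun k hk => by
    refine or_iff_not_imp_left.2 fun hki => Finset.card_le_one.1 ?_ k ?_ j hj
    · rw [Finset.card_erase_of_mem hi]; omega
    · exact Finset.mem_erase.2 ⟨hki, hk⟩
  obtain ⟨t, hti, htj⟩ := h i (hI hi) j (hI (Finset.mem_of_mem_erase hj))
  exact ⟨t, Set.mem_iInter₂.2 fun k hk => by rcases hij k hk with rfl | rfl <;> assumption⟩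

lemma exists_mem_of_isLowerSet_of_isUpperSet {L U : Finset (Set ℝ)}
    (hL : ∀ l ∈ L, IsLowerSet l ∧ l.Nonempty) (hU : ∀ u ∈ U, IsUpperSet u ∧ u.Nonempty)
    (hLU : ∀ l ∈ L, ∀ u ∈ U, (l ∩ u).Nonempty) :
    ∃ t, (∀ l ∈ L, t ∈ l) ∧ ∀ u ∈ U, t ∈ u := by
  have hconv : ∀ s ∈ L ∪ U, Convex ℝ (id s) := fun s hs => by
    rcases Finset.mem_union.1 hs with hs | hs
    exacts [(hL s hs).1.ordConnected.convex, (hU s hs).1.ordConnected.convex]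
  have meet {s t : Set ℝ} (hst : s ⊆ t ∨ t ⊆ s) (hs : s.Nonempty) (ht : t.Nonempty) :
      (s ∩ t).Nonempty := by
    rcases hst with h | h
    exacts [by rwa [Set.inter_eq_left.2 h], by rwa [Set.inter_eq_right.2 h]]
  have hpair : ∀ s ∈ L ∪ U, ∀ s' ∈ L ∪ U, (id s ∩ id s').Nonempty := by
    intro s hs s' hs'
    rcases Finset.mem_union.1 hs with hs | hs <;> rcases Finset.mem_union.1 hs' with hs' | hs'
    · exact meet ((hL s hs).1.total (hL s' hs').1) (hL s hs).2 (hL s' hs').2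
    · exact hLU s hs s' hs'
    · simpa [Set.inter_comm] using hLU s' hs' s hs
    · exact meet ((hU s hs).1.total (hU s' hs').1) (hU s hs).2 (hU s' hs').2
  obtain ⟨t, ht⟩ := nonempty_biInter_of_pairwise_inter_real hconv hpair
  simp only [id, Set.mem_iInter₂] at ht
  exact ⟨t, fun l hl => ht l (Finset.mem_union_left _ hl),
    fun u hu => ht u (Finset.mem_union_right _ hu)⟩

namespace Weight

def valTop : OVal → WithTop ℤ
  | none => ⊤
  | some c => c

lemma valTop_injective : Function.Injective valTop := by
  rintro (_ | a) (_ | b) h <;> simp_all [valTop]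

lemma ovLt_iff {a b : OVal} : ovLt a b ↔ valTop a < valTop b := by
  cases a <;> cases b <;> simp [ovLt, valTop]

/-- Weights are ordered lexicographically: by value first, and `(<, c)` below `(≤, c)`. -/
def toLex (w : Weight) : WithTop ℤ ×ₗ Bool := _root_.toLex (valTop w.val, !w.strict)

lemma toLex_injective : Function.Injective toLex := by
  rintro ⟨s, v⟩ ⟨s', v'⟩ h
  simp only [toLex, _root_.toLex_inj, Prod.mk.injEq, Bool.not_inj_iff] at h
  simp [valTop_injective h.1, h.2]

instance : LinearOrder Weight := LinearOrder.lift' toLex toLex_injective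

lemma lt_iff_lt {a b : Weight} : a.lt b ↔ a < b := by
  show _ ↔ a.toLex < b.toLex
  obtain ⟨s, v⟩ := a
  obtain ⟨s', v'⟩ := b
  simp only [Weight.lt, toLex, Prod.Lex.toLex_lt_toLex, ovLt_iff, valTop_injective.eq_iff]
  cases s <;> cases s' <;> simp

lemma le_iff_le {a b : Weight} : a.le b ↔ a ≤ b := by
  rw [le_iff_lt_or_eq, ← lt_iff_lt]; rfl

variable {a b w : Weight} {s : Bool} {c n f : ℤ} {d e x y : ℝ}

@[simp] lemma sat_none : (⟨s, none⟩ : Weight).sat d := trivial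

lemma sat_some : (⟨s, some c⟩ : Weight).sat d ↔ if s then d < c else d ≤ c := Iff.rfl

@[simp] lemma sat_wle : (wle n).sat d ↔ d ≤ n := Iff.rfl

@[simp] lemma sat_wlt : (wlt n).sat d ↔ d < n := Iff.rfl

lemma le_mk_iff {s' : Bool} {v v' : OVal} :
    (⟨s, v⟩ : Weight) ≤ ⟨s', v'⟩ ↔
      ovLt v v' ∨ v = v' ∧ (s' = true → s = true) := by
  rw [← le_iff_le, Weight.le, Weight.lt]
  cases s <;> cases s' <;> simp

lemma sat_of_le (h : e ≤ d) (hw : w.sat d) : w.sat e := by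
  rcases w with ⟨_ | _, _ | c⟩ <;> simp_all [sat_some] <;> linarith

lemma sat_mono (h : a ≤ b) (ha : a.sat d) : b.sat d := by
  rcases a with ⟨sa, _ | ca⟩ <;> rcases b with ⟨sb, _ | cb⟩ <;>
    simp_all [le_mk_iff, ovLt, sat_some]
  rcases h with h | ⟨rfl, h⟩
  · have : (ca : ℝ) < cb := by exact_mod_cast h
    cases sa <;> cases sb <;> simp only [if_true, if_false, Bool.false_eq_true] at ha ⊢ <;>
      linarith
  · cases sa <;> cases sb <;> simp_all
    linarith

lemma exists_sat (w : Weight) : ∃ d, w.sat d := by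
  refine ⟨(w.val.getD 0 : ℝ) - 1, ?_⟩
  rcases w with ⟨_ | _, _ | c⟩ <;> simp [sat_some]

lemma sat_add (ha : a.sat d) (hb : b.sat e) : (a.add b).sat (d + e) := by
  rcases a with ⟨sa, _ | ca⟩ <;> rcases b with ⟨sb, _ | cb⟩ <;> try trivial
  simp only [Weight.add, ovAdd, sat_some, Int.cast_add] at ha hb ⊢
  cases sa <;> cases sb <;> simp_all <;> linarith

lemma exists_sat_sub_of_sat_add (h : (a.add b).sat (y - x)) :
    ∃ t, a.sat (t - x) ∧ b.sat (y - t) := by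
  rcases a with ⟨sa, _ | ca⟩
  · obtain ⟨e, he⟩ := b.exists_sat
    exact ⟨y - e, trivial, by simpa using he⟩
  rcases b with ⟨sb, _ | cb⟩
  · exact ⟨x + ca - 1, by simp [sat_some]; split <;> linarith, trivial⟩
  refine ⟨x + (ca - cb + y - x) / 2, ?_, ?_⟩ <;>
  simp only [Weight.add, ovAdd, sat_some, Int.cast_add] at h ⊢ <;>
  cases sa <;> cases sb <;> simp_all <;> linarith

lemma sat_intCast_iff : w.sat n ↔ wle n ≤ w := by
  rcases w with ⟨_ | _, _ | c⟩ <;> simp [wle, le_mk_iff, ovLt, sat_some]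
  omega

lemma sat_of_wle_lt (h : wle n < w) (hd : d < n + 1) : w.sat d := by
  rcases w with ⟨sw, _ | c⟩
  · trivial
  rw [← lt_iff_lt] at h
  have : (n : ℝ) + 1 ≤ c := by
    simp [Weight.lt, wle, ovLt] at h
    exact_mod_cast (by omega : n + 1 ≤ c)
  rw [sat_some]
  split <;> linarith

lemma sat_of_floor_eq (h : w.floor = wle f) : w.sat f := by
  rcases w with ⟨_ | _, _ | c⟩ <;> simp_all [Weight.floor, wle, sat_some]
  omega

lemma lt_add_one_of_floor_eq (h : w.floor = wle f) (hd : w.sat d) : d < f + 1 := by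
  rcases w with ⟨_ | _, _ | c⟩ <;> simp_all [Weight.floor, wle, sat_some]
  · linarith
  · subst h; push_cast; linarith

lemma exists_lt (w : Weight) : ∃ w', w' < w := by
  refine ⟨wlt (w.val.getD 0 - 1), ?_⟩
  rcases w with ⟨_ | _, _ | c⟩ <;> simp [← not_le, wlt, le_mk_iff, ovLt]
  omega

lemma sat_sub_iff_of_floor_eq (w : Weight) {a b a' b' : ℝ}
    (ha : ⌊a⌋ = ⌊a'⌋) (hb : ⌊b⌋ = ⌊b'⌋)
    (hab : Int.fract a ≤ Int.fract b ↔ Int.fract a' ≤ Int.fract b')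
    (hba : Int.fract b ≤ Int.fract a ↔ Int.fract b' ≤ Int.fract a') :
    w.sat (b - a) ↔ w.sat (b' - a') := by
  rcases w with ⟨_ | _, _ | c⟩
  · exact Iff.rfl
  · simp only [sat_some, Bool.false_eq_true, if_false, sub_le_intCast_iff_floor_fract, ha, hb, hba]
  · exact Iff.rfl
  · have hlt (x y : ℝ) : y - x < c ↔ ¬ x - y ≤ ((-c : ℤ) : ℝ) := by
      push_cast; constructor <;> intro <;> linarith
    simp only [sat_some, if_true, hlt, sub_le_intCast_iff_floor_fract, ha, hb, hab]

end Weight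

section Regions

variable {X : Type*} {α : X → ℕ} {u v w : Val X}

def BoundedAt (α : X → ℕ) (v : Val X) (a : Vtx X) : Prop :=
  extV v a ≤ extV (fun x => (α x : ℝ)) a

@[simp] lemma boundedAt_none : BoundedAt α v none := le_rfl

@[simp] lemma boundedAt_some {x : X} : BoundedAt α v (some x) ↔ v x ≤ α x := Iff.rfl

lemma regEq.floor_eq (h : regEq α v u) {x : X} (hx : v x ≤ α x) :
    ⌊v x⌋ = ⌊u x⌋ ∧ (Int.fract (v x) = 0 ↔ Int.fract (u x) = 0) :=
  (h.1 x).resolve_left fun h' => h'.1.not_ge hx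

lemma regEq.lt_iff (h : regEq α v u) (x : X) : (α x : ℝ) < v x ↔ (α x : ℝ) < u x := by
  rcases h.1 x with ⟨hv, hu⟩ | ⟨hfl, hfr⟩
  · exact iff_of_true hv hu
  have := (wle (α x)).sat_sub_iff_of_floor_eq (a := 0) (a' := 0) (b := v x) (b' := u x) rfl hfl
    (by simp [Int.fract_nonneg]) (by simp [(Int.fract_nonneg _).ge_iff_eq', hfr])
  simpa [not_le] using this.not

lemma regEq_refl (v : Val X) : regEq α v v :=
  ⟨fun _ => Or.inr ⟨rfl, Iff.rfl⟩, fun _ _ _ _ => Iff.rfl⟩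

lemma regEq.symm (h : regEq α v u) : regEq α u v := by
  refine ⟨fun x => (h.1 x).imp And.symm fun h' => ⟨h'.1.symm, h'.2.symm⟩,
    fun x y hx hy => ?_⟩
  rw [← not_lt, ← h.lt_iff, not_lt] at hx hy
  exact (h.2 x y hx hy).symm

lemma regEq.trans (h₁ : regEq α u v) (h₂ : regEq α v w) : regEq α u w := by
  refine ⟨fun x => ?_, fun x y hx hy => ?_⟩
  · by_cases hx : (α x : ℝ) < u x
    · exact Or.inl ⟨hx, (h₂.lt_iff x).1 ((h₁.lt_iff x).1 hx)⟩
    rw [not_lt] at hx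
    have hvx : v x ≤ α x := by rwa [← not_lt, ← h₁.lt_iff, not_lt]
    obtain ⟨f₁, z₁⟩ := h₁.floor_eq hx
    obtain ⟨f₂, z₂⟩ := h₂.floor_eq hvx
    exact Or.inr ⟨f₁.trans f₂, z₁.trans z₂⟩
  · have hvx : v x ≤ α x := by rwa [← not_lt, ← h₁.lt_iff, not_lt]
    have hvy : v y ≤ α y := by rwa [← not_lt, ← h₁.lt_iff, not_lt]
    exact (h₁.2 x y hx hy).trans (h₂.2 x y hvx hvy)

lemma mem_Closure_iff {S : Set (Val X)} (hv : Nonneg v) :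
    v ∈ Closure α S ↔ ∃ u ∈ S, Nonneg u ∧ regEq α v u := by
  constructor
  · rintro ⟨R, ⟨⟨v₀, -, rfl⟩, u, ⟨hu, h₀u⟩, huS⟩, -, h₀v⟩
    exact ⟨u, huS, hu, h₀v.symm.trans h₀u⟩
  · rintro ⟨u, huS, hu, hvu⟩
    exact ⟨_, ⟨⟨v, hv, rfl⟩, u, ⟨hu, hvu⟩, huS⟩, hv, regEq_refl v⟩

lemma regEq.floor_extV_eq (h : regEq α v u) {a : Vtx X} (ha : BoundedAt α v a) :
    ⌊extV v a⌋ = ⌊extV u a⌋ ∧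
      (Int.fract (extV v a) = 0 ↔ Int.fract (extV u a) = 0) := by
  cases a with
  | none => simp [extV]
  | some x => exact h.floor_eq ha

lemma regEq.fract_extV_le_iff (h : regEq α v u) {a b : Vtx X} (ha : BoundedAt α v a)
    (hb : BoundedAt α v b) :
    Int.fract (extV v a) ≤ Int.fract (extV v b) ↔
      Int.fract (extV u a) ≤ Int.fract (extV u b) := by
  cases a with
  | none => simp [extV, Int.fract_nonneg]
  | some x =>
    cases b with
    | none =>
      simpa [extV, (Int.fract_nonneg _).ge_iff_eq'] using (h.floor_eq ha).2
    | some y => exact h.2 x y ha hb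

lemma regEq.sat_sub_iff (h : regEq α v u) {a b : Vtx X} (ha : BoundedAt α v a)
    (hb : BoundedAt α v b) (c : Weight) :
    c.sat (extV v b - extV v a) ↔ c.sat (extV u b - extV u a) :=
  c.sat_sub_iff_of_floor_eq (h.floor_extV_eq ha).1 (h.floor_extV_eq hb).1
    (h.fract_extV_le_iff ha hb) (h.fract_extV_le_iff hb ha)

end Regions

namespace IsCanonGraph

variable {X : Type*} {G : DGraph X} {Z : Set (Val X)} {v : Val X}

lemma sat (hG : IsCanonGraph G Z) (hv : v ∈ Z) (a b : Vtx X) :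
    (G a b).sat (extV v b - extV v a) := by
  rw [← hG.1] at hv
  exact hv.2 a b

lemma nonneg (hG : IsCanonGraph G Z) (hv : v ∈ Z) : Nonneg v := by
  rw [← hG.1] at hv
  exact hv.1

lemma le_of_bounds (hG : IsCanonGraph G Z) {a b : Vtx X} {w : Weight} (h : Bounds Z a b w) :
    G a b ≤ w :=
  Weight.le_iff_le.1 (hG.2 a b w h)

lemma exists_not_sat (hG : IsCanonGraph G Z) {a b : Vtx X} {w : Weight} (h : w < G a b) :
    ∃ v ∈ Z, ¬ w.sat (extV v b - extV v a) := by
  by_contra! hw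
  exact (hG.le_of_bounds hw).not_gt h

lemma nonempty (hG : IsCanonGraph G Z) : Z.Nonempty := by
  obtain ⟨w, hw⟩ := (G none none).exists_lt
  obtain ⟨v, hv, -⟩ := hG.exists_not_sat hw
  exact ⟨v, hv⟩

lemma le_add (hG : IsCanonGraph G Z) (a b c : Vtx X) : G a b ≤ (G a c).add (G c b) :=
  hG.le_of_bounds fun v hv => by
    simpa using Weight.sat_add (hG.sat hv a c) (hG.sat hv c b)

lemma self_eq (hG : IsCanonGraph G Z) (a : Vtx X) : G a a = wle 0 := by
  obtain ⟨v, hv⟩ := hG.nonempty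
  refine le_antisymm (hG.le_of_bounds fun v _ => by simp) ?_
  have := hG.sat hv a a
  rwa [sub_self, ← Int.cast_zero, Weight.sat_intCast_iff] at this

lemma le_wle_zero (hG : IsCanonGraph G Z) (x : X) : G (some x) none ≤ wle 0 :=
  hG.le_of_bounds fun v hv => by simpa [extV] using hG.nonneg hv x

lemma exists_floor_eq (hG : IsCanonGraph G Z) (x : X) : ∃ f, (G (some x) none).floor = wle f := by
  have h := hG.le_wle_zero x
  rcases hG' : G (some x) none with ⟨_ | _, _ | c⟩ <;>
    simp_all [Weight.floor, wle, Weight.le_mk_iff, ovLt]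

lemma wle_neg_le_of_le (hG : IsCanonGraph G Z) (hv : v ∈ Z) {x : X} {n : ℕ} (hx : v x ≤ n) :
    wle (-n) ≤ G (some x) none := by
  rw [← Weight.sat_intCast_iff]
  exact Weight.sat_of_le (by simpa [extV]) (hG.sat hv (some x) none)

lemma mem_of_forall_sat (hG : IsCanonGraph G Z) {r : Vtx X → ℝ}
    (hr : ∀ a b, (G a b).sat (r b - r a)) : (fun x => r (some x) - r none) ∈ Z := by
  rw [← hG.1]
  refine ⟨fun x => ?_, fun a b => ?_⟩
  · have := Weight.sat_mono (hG.le_wle_zero x) (hr (some x) none)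
    simp only [Weight.sat_wle, Int.cast_zero] at this
    linarith
  · convert hr a b using 1
    cases a <;> cases b <;> simp [extV]

end IsCanonGraph

section Extension

variable {X : Type*} {W : DGraph X} {P : Finset (Vtx X)} {r : Vtx X → ℝ}

def Consistent (W : DGraph X) (P : Finset (Vtx X)) (r : Vtx X → ℝ) : Prop :=
  ∀ a ∈ P, ∀ b ∈ P, (W a b).sat (r b - r a)

lemma exists_sat_between (htri : ∀ a b c, W a b ≤ (W a c).add (W c b)) {a b : Vtx X} {x y : ℝ}
    (h : (W a b).sat (y - x)) (c : Vtx X) : ∃ t, (W a c).sat (t - x) ∧ (W c b).sat (y - t) :=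
  Weight.exists_sat_sub_of_sat_add (Weight.sat_mono (htri a b c) h)

lemma Consistent.insert_update {z : Vtx X} (hself : (W z z).sat 0) (hr : Consistent W P r)
    (hz : z ∉ P) {t : ℝ} (ht : ∀ a ∈ P, (W a z).sat (t - r a) ∧ (W z a).sat (r a - t)) :
    Consistent W (insert z P) (Function.update r z t) := by
  have hrP : ∀ a ∈ P, Function.update r z t a = r a := fun a ha =>
    Function.update_of_ne (fun h : a = z => hz (h ▸ ha)) _ _
  intro a ha b hb
  rw [Finset.mem_insert] at ha hb
  rcases ha with ha | ha <;> rcases hb with hb | hb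
  · simpa [ha, hb] using hself
  · simpa [ha, hrP b hb] using (ht b hb).2
  · simpa [hb, hrP a ha] using (ht a ha).1
  · simpa [hrP a ha, hrP b hb] using hr a ha b hb

lemma Consistent.exists_extend (htri : ∀ a b c, W a b ≤ (W a c).add (W c b))
    (hself : ∀ a, (W a a).sat 0) (hr : Consistent W P r) (hP : P.Nonempty) {z : Vtx X}
    (hz : z ∉ P) {E : Finset (Set ℝ)}
    (hE : ∀ e ∈ E, IsUpperSet e ∧ ∀ a ∈ P, ∃ t ∈ e, (W a z).sat (t - r a)) :
    ∃ t, (∀ e ∈ E, t ∈ e) ∧ Consistent W (insert z P) (Function.update r z t) := by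
  let below a := {t | (W a z).sat (t - r a)}
  let above a := {t | (W z a).sat (r a - t)}
  have hbelow : ∀ l ∈ P.image below, IsLowerSet l ∧ l.Nonempty := by
    simp only [Finset.mem_image, forall_exists_index, and_imp, forall_apply_eq_imp_iff₂]
    intro a _
    obtain ⟨d, hd⟩ := (W a z).exists_sat
    exact ⟨fun s t hts hs => Weight.sat_of_le (by linarith) hs, r a + d, by simpa [below]⟩
  have habove : ∀ u ∈ P.image above ∪ E, IsUpperSet u ∧ u.Nonempty := by
    intro u hu
    rcases Finset.mem_union.1 hu with hu | hu
    · obtain ⟨a, -, rfl⟩ := Finset.mem_image.1 hu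
      obtain ⟨d, hd⟩ := (W z a).exists_sat
      exact ⟨fun s t hst hs => Weight.sat_of_le (by linarith) hs, r a - d, by simpa [above]⟩
    · obtain ⟨a, ha⟩ := hP
      obtain ⟨t, ht, -⟩ := (hE u hu).2 a ha
      exact ⟨(hE u hu).1, t, ht⟩
  have hmeet : ∀ l ∈ P.image below, ∀ u ∈ P.image above ∪ E, (l ∩ u).Nonempty := by
    simp only [Finset.mem_image, forall_exists_index, and_imp, forall_apply_eq_imp_iff₂]
    intro a ha u hu
    rcases Finset.mem_union.1 hu with hu | hu
    · obtain ⟨b, hb, rfl⟩ := Finset.mem_image.1 hu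
      exact exists_sat_between htri (hr a ha b hb) z
    · obtain ⟨t, ht, hat⟩ := (hE u hu).2 a ha
      exact ⟨t, hat, ht⟩
  obtain ⟨t, htb, hta⟩ := exists_mem_of_isLowerSet_of_isUpperSet hbelow habove hmeet
  refine ⟨t, fun e he => hta e (Finset.mem_union_right _ he), hr.insert_update (hself z) hz
    fun a ha => ⟨htb _ (Finset.mem_image_of_mem _ ha), ?_⟩⟩
  exact hta _ (Finset.mem_union_left _ (Finset.mem_image_of_mem _ ha))

lemma Consistent.exists_extend_univ [Fintype X] (htri : ∀ a b c, W a b ≤ (W a c).add (W c b))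
    (hself : ∀ a, (W a a).sat 0) (hr : Consistent W P r) (hP : P.Nonempty) {E : Vtx X → Set ℝ}
    (hE : ∀ q, IsUpperSet (E q))
    (hEP : ∀ q ∉ P, ∀ a ∈ P, ∃ t ∈ E q, (W a q).sat (t - r a)) :
    ∃ r' : Vtx X → ℝ, (∀ a ∈ P, r' a = r a) ∧ (∀ a b, (W a b).sat (r' b - r' a)) ∧
      ∀ q ∉ P, r' q ∈ E q := by
  induction h : Pᶜ.card generalizing P r with
  | zero =>
    obtain rfl : P = Finset.univ := by simpa using h
    exact ⟨r, fun _ _ => rfl, fun a b => hr a (Finset.mem_univ a) b (Finset.mem_univ b),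
      fun q hq => (hq (Finset.mem_univ q)).elim⟩
  | succ n ih =>
    obtain ⟨z, hz⟩ := Finset.card_pos.1 (by omega : 0 < Pᶜ.card)
    have hzP : z ∉ P := Finset.mem_compl.1 hz
    -- placing `z` inside every `F q` preserves `hEP` for the vertices still to be placed
    let F q := {t | ∃ s ∈ E q, (W z q).sat (s - t)}
    obtain ⟨t, htE, hcons⟩ := hr.exists_extend htri hself hP hzP
      (E := insert (E z) ((Pᶜ.erase z).image F)) (by
        intro e he
        rcases Finset.mem_insert.1 he with rfl | he
        · exact ⟨hE z, hEP z hzP⟩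
        obtain ⟨q, hq, rfl⟩ := Finset.mem_image.1 he
        refine ⟨fun s t hst ⟨u, hu, hsu⟩ => ⟨u, hu, Weight.sat_of_le (by linarith) hsu⟩,
          fun a ha => ?_⟩
        obtain ⟨s, hs, has⟩ := hEP q (Finset.mem_compl.1 (Finset.mem_of_mem_erase hq)) a ha
        obtain ⟨t, hat, hts⟩ := exists_sat_between htri has z
        exact ⟨t, ⟨s, hs, hts⟩, hat⟩)
    have hne : ∀ a ∈ P, a ≠ z := fun a ha h => hzP (h ▸ ha)
    obtain ⟨r', hr'P, hr'sat, hr'E⟩ := ih hcons (Finset.insert_nonempty z P) (by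
      intro q hq a ha
      rw [Finset.mem_insert, not_or] at hq
      rcases Finset.mem_insert.1 ha with rfl | ha
      · obtain ⟨s, hs, hts⟩ := htE _ (Finset.mem_insert_of_mem (Finset.mem_image_of_mem F
          (Finset.mem_erase.2 ⟨hq.1, Finset.mem_compl.2 hq.2⟩)))
        exact ⟨s, hs, by simpa using hts⟩
      · simpa [Function.update_of_ne (hne a ha)] using hEP q hq.2 a ha)
      (by rw [Finset.compl_insert, Finset.card_erase_of_mem hz, h, Nat.add_sub_cancel])
    refine ⟨r', fun a ha => ?_, hr'sat, fun q hq => ?_⟩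
    · rw [hr'P a (Finset.mem_insert_of_mem ha), Function.update_of_ne (hne a ha)]
    · by_cases hqz : q = z
      · subst hqz
        simpa [hr'P q (Finset.mem_insert_self q P)] using htE _ (Finset.mem_insert_self _ _)
      · exact hr'E q (by simp [hqz, hq])

end Extension

section Main

variable {X : Type*} {α : X → ℕ} {G G' : DGraph X} {Z Z' : Set (Val X)} {v : Val X}

def Witness (α : X → ℕ) (G G' : DGraph X) (x y : X) : Prop :=
  (G' none (some x) < G none (some x) ∧ G' none (some x) ≤ wle (α x : ℤ)) ∨
  (G' (some x) none < G (some x) none ∧ wle (-(α x : ℤ)) ≤ G (some x) none) ∨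
  (wle (-(α x : ℤ)) ≤ G (some x) none ∧ G' (some x) (some y) < G (some x) (some y) ∧
    G' (some x) (some y) ≤ (wle (α y : ℤ)).add (G (some x) none).floor)

lemma sat_of_forall_not_witness (hG : IsCanonGraph G Z) (hG' : IsCanonGraph G' Z')
    (h : ∀ x y, ¬ Witness α G G' x y) (hv : v ∈ Z) {a b : Vtx X} (ha : BoundedAt α v a)
    (hb : BoundedAt α v b) : (G' a b).sat (extV v b - extV v a) := by
  cases a with
  | none =>
    cases b with
    | none => simp [hG'.self_eq]
    | some y =>
      rcases not_and_or.1 fun h' => h y y (Or.inl h') with h' | h'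
      · exact Weight.sat_mono (not_lt.1 h') (hG.sat hv _ _)
      · refine Weight.sat_of_wle_lt (not_le.1 h') ?_
        simp only [boundedAt_some] at hb
        simp only [extV, sub_zero, Int.cast_natCast]
        linarith
  | some x =>
    cases b with
    | none =>
      rcases not_and_or.1 fun h' => h x x (Or.inr (Or.inl h')) with h' | h'
      · exact Weight.sat_mono (not_lt.1 h') (hG.sat hv _ _)
      · exact (h' (hG.wle_neg_le_of_le hv ha)).elim
    | some y =>
      rcases not_and_or.1 fun h' => h x y (Or.inr (Or.inr h')) with h' | h'
      · exact (h' (hG.wle_neg_le_of_le hv ha)).elim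
      rcases not_and_or.1 h' with h' | h'
      · exact Weight.sat_mono (not_lt.1 h') (hG.sat hv _ _)
      obtain ⟨f, hf⟩ := hG.exists_floor_eq x
      have hx := Weight.lt_add_one_of_floor_eq hf (hG.sat hv (some x) none)
      rw [hf] at h'
      refine Weight.sat_of_wle_lt (n := α y + f) (not_le.1 h') ?_
      simp only [boundedAt_some] at hb
      simp only [extV] at hx ⊢
      push_cast
      linarith

lemma exists_gt_sat_of_forall_not_witness (hG : IsCanonGraph G Z)
    (h : ∀ x y, ¬ Witness α G G' x y) (hv : v ∈ Z) {a : Vtx X} (ha : BoundedAt α v a) {y : X}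
    (hy : (α y : ℝ) < v y) : ∃ t, (α y : ℝ) < t ∧ (G' a (some y)).sat (t - extV v a) := by
  cases a with
  | none =>
    rcases not_and_or.1 fun h' => h y y (Or.inl h') with h' | h'
    · exact ⟨v y, hy, Weight.sat_mono (not_lt.1 h') (hG.sat hv _ _)⟩
    · exact ⟨α y + 1 / 2, by linarith,
        Weight.sat_of_wle_lt (not_le.1 h') (by norm_num [extV])⟩
  | some x =>
    rcases not_and_or.1 fun h' => h x y (Or.inr (Or.inr h')) with h' | h'
    · exact (h' (hG.wle_neg_le_of_le hv ha)).elim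
    rcases not_and_or.1 h' with h' | h'
    · exact ⟨v y, hy, Weight.sat_mono (not_lt.1 h') (hG.sat hv _ _)⟩
    obtain ⟨f, hf⟩ := hG.exists_floor_eq x
    have hx := Weight.lt_add_one_of_floor_eq hf (hG.sat hv (some x) none)
    rw [hf] at h'
    simp only [extV] at hx ⊢
    refine ⟨α y + (f + 1 + v x) / 2, by linarith,
      Weight.sat_of_wle_lt (n := α y + f) (not_le.1 h') ?_⟩
    push_cast
    linarith

theorem subset_closure_of_forall_not_witness [Fintype X] (hG : IsCanonGraph G Z)
    (hG' : IsCanonGraph G' Z') (h : ∀ x y, ¬ Witness α G G' x y) : Z ⊆ Closure α Z' := by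
  intro v hv
  let P := Finset.univ.filter (BoundedAt α v)
  have hP : ∀ {a}, a ∈ P ↔ BoundedAt α v a := by simp [P]
  obtain ⟨r, hrP, hr, hrE⟩ := Consistent.exists_extend_univ (W := G') (r := extV v) hG'.le_add
    (by simp [hG'.self_eq])
    (fun a ha b hb => sat_of_forall_not_witness hG hG' h hv (hP.1 ha) (hP.1 hb))
    ⟨none, hP.2 boundedAt_none⟩ (E := fun q => Set.Ioi (extV (fun x => (α x : ℝ)) q))
    (fun _ => isUpperSet_Ioi _) (by
      rintro (_ | y) hy a ha
      · exact (hy (hP.2 boundedAt_none)).elim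
      · exact exists_gt_sat_of_forall_not_witness hG h hv (hP.1 ha)
          (not_le.1 fun h' => hy (hP.2 h')))
  have hr0 : r none = 0 := hrP none (hP.2 boundedAt_none)
  have hrv : ∀ x, v x ≤ α x → r (some x) = v x := fun x hx => hrP _ (hP.2 hx)
  have hrα : ∀ x, (α x : ℝ) < v x → (α x : ℝ) < r (some x) := fun x hx =>
    hrE (some x) fun h' => (hP.1 h').not_gt hx
  have hu := hG'.mem_of_forall_sat hr
  refine (mem_Closure_iff (hG.nonneg hv)).2
    ⟨_, hu, hG'.nonneg hu, fun x => ?_, fun x y hx hy => ?_⟩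
  · by_cases hx : v x ≤ α x
    · simp [hr0, hrv x hx]
    · exact Or.inl ⟨not_le.1 hx, by simpa [hr0] using hrα x (not_le.1 hx)⟩
  · simp [hr0, hrv x hx, hrv y hy]

lemma IsCanonGraph.exists_mem_le_and_not_sat [Fintype X] (hG : IsCanonGraph G Z) {x y : X}
    (hxy : x ≠ y) {w : Weight} (hw : w < G (some x) (some y)) {f : ℤ}
    (hf : (G (some x) none).sat f) : ∃ v ∈ Z, v x ≤ -f ∧ ¬ w.sat (v y - v x) := by
  -- values are taken relative to `x`, which stays at `0`; so `x₀ ∈ Ici f` means `v x ≤ -f`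
  let E : Vtx X → Set ℝ := fun q =>
    if q = none then Set.Ici (f : ℝ) else if q = some y then {t | ¬ w.sat t} else Set.univ
  obtain ⟨r, hrx, hr, hrE⟩ := Consistent.exists_extend_univ (P := {some x}) (r := 0) (E := E)
    hG.le_add (by simp [hG.self_eq]) (by simp [Consistent, hG.self_eq])
    (Finset.singleton_nonempty _) (fun q => by
      unfold E; split_ifs
      exacts [isUpperSet_Ici _, fun s t hst hs ht => hs (Weight.sat_of_le hst ht), isUpperSet_univ])
    (by
      intro q hq a ha
      obtain rfl := Finset.mem_singleton.1 ha
      rcases q with _ | q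
      · exact ⟨f, by simp [E], by simpa using hf⟩
      by_cases hqy : q = y
      · rw [hqy]
        obtain ⟨v, hv, hns⟩ := hG.exists_not_sat hw
        exact ⟨v y - v x, by simpa [E, extV] using hns, by simpa [extV] using hG.sat hv _ _⟩
      · obtain ⟨t, ht⟩ := (G (some x) (some q)).exists_sat
        exact ⟨t, by simp [E, hqy], by simpa using ht⟩)
  have h0 : (f : ℝ) ≤ r none := by simpa [E] using hrE none (by simp)
  have hy : ¬ w.sat (r (some y)) := by simpa [E] using hrE (some y) (by simp [hxy.symm])
  have hx : r (some x) = 0 := by simpa using hrx (some x) (by simp)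
  exact ⟨_, hG.mem_of_forall_sat hr, by simp [hx, h0], by simpa [hx] using hy⟩

theorem not_subset_closure_of_upper_bound (hG : IsCanonGraph G Z) (hG' : IsCanonGraph G' Z')
    {x : X} (h₁ : G' none (some x) < G none (some x))
    (h₂ : G' none (some x) ≤ wle (α x : ℤ)) :
    ¬ Z ⊆ Closure α Z' := by
  intro hsub
  obtain ⟨v, hv, hns⟩ := hG.exists_not_sat h₁
  obtain ⟨u, hu, -, hvu⟩ := (mem_Closure_iff (hG.nonneg hv)).1 (hsub hv)
  have hsat := hG'.sat hu none (some x)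
  by_cases hx : v x ≤ α x
  · exact hns ((hvu.sat_sub_iff (b := some x) boundedAt_none hx _).2 hsat)
  · have hux := (hvu.lt_iff x).1 (not_le.1 hx)
    have := Weight.sat_mono h₂ hsat
    simp only [extV, sub_zero, Weight.sat_wle, Int.cast_natCast] at this
    linarith

theorem not_subset_closure_of_lower_bound (hG : IsCanonGraph G Z) (hG' : IsCanonGraph G' Z')
    {x : X} (h₁ : G' (some x) none < G (some x) none)
    (h₂ : wle (-(α x : ℤ)) ≤ G (some x) none) :
    ¬ Z ⊆ Closure α Z' := by
  intro hsub
  have hlt : wlt (-(α x : ℤ)) < wle (-(α x : ℤ)) := by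
    simp [← Weight.lt_iff_lt, Weight.lt, wlt, wle]
  obtain ⟨v, hv, hns⟩ := hG.exists_not_sat (max_lt h₁ (hlt.trans_le h₂))
  have hx : v x ≤ α x := by
    have := mt (Weight.sat_mono (le_max_right _ _)) hns
    simp only [extV, zero_sub, Weight.sat_wlt, Int.cast_neg, Int.cast_natCast, neg_lt_neg_iff,
      not_lt] at this
    exact this
  obtain ⟨u, hu, -, hvu⟩ := (mem_Closure_iff (hG.nonneg hv)).1 (hsub hv)
  exact mt (Weight.sat_mono (le_max_left _ _)) hns
    ((hvu.sat_sub_iff (a := some x) hx boundedAt_none _).2 (hG'.sat hu _ _))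

theorem not_subset_closure_of_diagonal [Fintype X] (hG : IsCanonGraph G Z)
    (hG' : IsCanonGraph G' Z') {x y : X} (h₁ : wle (-(α x : ℤ)) ≤ G (some x) none)
    (h₂ : G' (some x) (some y) < G (some x) (some y))
    (h₃ : G' (some x) (some y) ≤ (wle (α y : ℤ)).add (G (some x) none).floor) :
    ¬ Z ⊆ Closure α Z' := by
  obtain rfl | hxy := eq_or_ne x y
  · rw [hG.self_eq, hG'.self_eq] at h₂
    exact (lt_irrefl _ h₂).elim
  obtain ⟨f, hf⟩ := hG.exists_floor_eq x
  have hαf : -(α x : ℤ) ≤ f := by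
    have := Weight.lt_add_one_of_floor_eq hf (Weight.sat_intCast_iff.2 h₁)
    exact Int.lt_add_one_iff.1 (by exact_mod_cast this)
  obtain ⟨v, hv, hvx, hns⟩ := hG.exists_mem_le_and_not_sat hxy h₂ (Weight.sat_of_floor_eq hf)
  have hbx : v x ≤ α x := by
    have : (-(α x : ℤ) : ℝ) ≤ f := by exact_mod_cast hαf
    push_cast at this
    linarith
  intro hsub
  obtain ⟨u, hu, -, hvu⟩ := (mem_Closure_iff (hG.nonneg hv)).1 (hsub hv)
  have hsat := hG'.sat hu (some x) (some y)
  by_cases hby : v y ≤ α y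
  · exact hns ((hvu.sat_sub_iff (a := some x) (b := some y) hbx hby _).2 hsat)
  · have huy := (hvu.lt_iff y).1 (not_le.1 hby)
    have hux : u x ≤ -f := by
      simpa [extV] using (hvu.sat_sub_iff (b := some x) boundedAt_none hbx (wle (-f))).1
        (by simpa [extV] using hvx)
    rw [hf] at h₃
    have : (wle (α y + f)).sat (u y - u x) := Weight.sat_mono h₃ hsat
    simp only [Weight.sat_wle] at this
    push_cast at this
    linarith

theorem not_subset_closure_of_witness [Fintype X] (hG : IsCanonGraph G Z)
    (hG' : IsCanonGraph G' Z') {x y : X} (h : Witness α G G' x y) : ¬ Z ⊆ Closure α Z' := by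
  rcases h with ⟨h₁, h₂⟩ | ⟨h₁, h₂⟩ | ⟨h₁, h₂, h₃⟩
  · exact not_subset_closure_of_upper_bound hG hG' h₁ h₂
  · exact not_subset_closure_of_lower_bound hG hG' h₁ h₂
  · exact not_subset_closure_of_diagonal hG hG' h₁ h₂ h₃

end Main

theorem stmt3_general {X : Type*} [Fintype X] (α : X → ℕ) (Z Z' : Set (Val X))
    (G G' : DGraph X) (hG : IsCanonGraph G Z) (hG' : IsCanonGraph G' Z') :
    ¬ (Z ⊆ Closure α Z') ↔
      ∃ x y : X,
        ((G' none (some x)).lt (G none (some x)) ∧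
          (G' none (some x)).le (wle (α x : ℤ))) ∨
        ((G' (some x) none).lt (G (some x) none) ∧
          (wle (-(α x : ℤ))).le (G (some x) none)) ∨
        ((wle (-(α x : ℤ))).le (G (some x) none) ∧
          (G' (some x) (some y)).lt (G (some x) (some y)) ∧
          (G' (some x) (some y)).le ((wle (α y : ℤ)).add (G (some x) none).floor)) := by
  simp only [Weight.lt_iff_lt, Weight.le_iff_le]
  refine ⟨fun hns => ?_, fun ⟨x, y, h⟩ => not_subset_closure_of_witness hG hG' h⟩
  by_contra hw
  exact hns (subset_closure_of_forall_not_witness hG hG' fun x y h => hw ⟨x, y, h⟩)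

/-- `Z ⊄ Closure_α(Z')` iff one of the three edge conditions holds
for some clocks `x, y` (both different from `x₀`). -/
theorem stmt3 {X : Type*} [Fintype X] (α : X → ℕ) (Z Z' : Set (Val X))
    (hZ : IsZone Z) (hZ' : IsZone Z')
    (G G' : DGraph X) (hG : IsCanonGraph G Z) (hG' : IsCanonGraph G' Z') :
    ¬ (Z ⊆ Closure α Z') ↔
      ∃ x y : X,
        ((G' none (some x)).lt (G none (some x)) ∧
          (G' none (some x)).le (wle (α x : ℤ))) ∨
        ((G' (some x) none).lt (G (some x) none) ∧
          (wle (-(α x : ℤ))).le (G (some x) none)) ∨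
        ((wle (-(α x : ℤ))).le (G (some x) none) ∧
          (G' (some x) (some y)).lt (G (some x) (some y)) ∧
          (G' (some x) (some y)).le ((wle (α y : ℤ)).add (G (some x) none).floor)) :=
  stmt3_general α Z Z' G G' hG hG'

end TAform

end
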